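/- arXiv:2307.16059 — 4 statements merged into one kernel-verified Lean document; each statement's English description precedes it below -/
import Mathlib

section
/- Let f be convex and differentiable, Q convex compact, x_k ∈ Q, s_k ∈ Q minimizing ⟪∇f(x_k), s⟫ over Q, d_k = s_k - x_k, L_k > 0. Assume ⟪∇f(x_k), d_k⟫ ≤ -L_k‖d_k‖² (the full-step condition θ_k ≥ 1) and the descent condition f(x_k + d_k) ≤ f(x_k) + ⟪∇f(x_k), d_k⟫ + (L_k/2)‖d_k‖². Then, with x* a minimizer of f on Q and x_{k+1} = x_k + d_k, we have f(x_{k+1}) - f(x*) ≤ (1/2)·min(L_k‖d_k‖², f(x_k) - f(x*)). -/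
/-!
Convexity gives `f x* ≥ f x_k + ⟪∇f(x_k), x* - x_k⟫ ≥ f x_k + ⟪∇f(x_k), d_k⟫`, the second step
because `s_k` minimizes the linear functional over `Q ∋ x*`; so the primal gap at `x_k` is at most
`-⟪∇f(x_k), d_k⟫`. Inserting this into the descent condition bounds the new gap by
`L_k/2 ‖d_k‖²`, and using instead `⟪∇f(x_k), d_k⟫ ≤ -L_k ‖d_k‖²` to absorb the quadratic term
bounds it by half the old gap.
-/

open RealInnerProductSpace

namespace ConvexOn

variable {E : Type*} {S : Set E} {f : E → ℝ} {x y : E}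

theorem add_fderiv_sub_le [NormedAddCommGroup E] [NormedSpace ℝ E] {f' : E →L[ℝ] ℝ}
    (hf : ConvexOn ℝ S f) (hx : x ∈ S) (hy : y ∈ S) (hf' : HasFDerivAt f f' x) :
    f x + f' (y - x) ≤ f y := by
  set γ : ℝ →ᵃ[ℝ] E := AffineMap.lineMap x y
  have hline : ConvexOn ℝ (γ ⁻¹' S) (f ∘ γ) := hf.comp_affineMap γ
  have hderiv : HasDerivAt (f ∘ γ) (f' (y - x)) 0 := by
    have hf'0 : HasFDerivAt f f' (γ 0) := by rwa [AffineMap.lineMap_apply_zero]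
    exact hf'0.comp_hasDerivAt 0 AffineMap.hasDerivAt_lineMap
  have hslope := hline.le_slope_of_hasDerivAt (x := 0) (y := 1)
    (by simpa [γ] using hx) (by simpa [γ] using hy) zero_lt_one hderiv
  simp only [γ, slope_def_field, Function.comp_apply, AffineMap.lineMap_apply_zero,
    AffineMap.lineMap_apply_one, sub_zero, div_one] at hslope
  linarith

theorem add_inner_gradient_sub_le [NormedAddCommGroup E] [InnerProductSpace ℝ E] [CompleteSpace E]
    {g : E} (hf : ConvexOn ℝ S f) (hx : x ∈ S) (hy : y ∈ S) (hg : HasGradientAt f g x) :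
    f x + ⟪g, y - x⟫ ≤ f y := by
  simpa using hf.add_fderiv_sub_le hx hy (hasGradientAt_iff_hasFDerivAt.mp hg)

/-- The Frank–Wolfe duality gap `⟪∇f(x), x - s⟫` bounds the primal gap at `x`. -/
theorem sub_le_neg_inner_gradient_of_forall_inner_le [NormedAddCommGroup E]
    [InnerProductSpace ℝ E] [CompleteSpace E] {Q : Set E} {s z : E} (hf : ConvexOn ℝ Set.univ f)
    (hfx : DifferentiableAt ℝ f x) (hz : z ∈ Q)
    (hs : ∀ s' ∈ Q, ⟪gradient f x, s⟫ ≤ ⟪gradient f x, s'⟫) :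
    f x - f z ≤ -⟪gradient f x, s - x⟫ := by
  have htangent := hf.add_inner_gradient_sub_le (Set.mem_univ x) (Set.mem_univ z)
    hfx.hasGradientAt
  have hlinear := hs z hz
  rw [inner_sub_right] at htangent ⊢
  linarith

end ConvexOn

theorem stmt1_general {n : ℕ} (f : EuclideanSpace ℝ (Fin n) → ℝ)
    (Q : Set (EuclideanSpace ℝ (Fin n)))
    (hconv : ConvexOn ℝ Set.univ f) (hdiff : Differentiable ℝ f)
    (xk sk xstar : EuclideanSpace ℝ (Fin n))
    (hxstar : xstar ∈ Q)
    (hskmin : ∀ s ∈ Q, ⟪gradient f xk, sk⟫ ≤ ⟪gradient f xk, s⟫)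
    (L : ℝ)
    (hfull : ⟪gradient f xk, sk - xk⟫ ≤ -(L * ‖sk - xk‖ ^ 2))
    (hdesc : f (xk + (sk - xk)) ≤
      f xk + ⟪gradient f xk, sk - xk⟫ + L / 2 * ‖sk - xk‖ ^ 2) :
    f (xk + (sk - xk)) - f xstar ≤
      1 / 2 * min (L * ‖sk - xk‖ ^ 2) (f xk - f xstar) := by
  have hgap := hconv.sub_le_neg_inner_gradient_of_forall_inner_le (hdiff xk) hxstar hskmin
  rw [mul_min_of_nonneg _ _ (by norm_num)]
  exact le_min (by linarith) (by linarith)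

theorem stmt1 {n : ℕ} (f : EuclideanSpace ℝ (Fin n) → ℝ)
    (Q : Set (EuclideanSpace ℝ (Fin n)))
    (hQconv : Convex ℝ Q) (hQcomp : IsCompact Q)
    (hconv : ConvexOn ℝ Set.univ f) (hdiff : Differentiable ℝ f)
    (xk sk xstar : EuclideanSpace ℝ (Fin n))
    (hxk : xk ∈ Q) (hsk : sk ∈ Q) (hxstar : xstar ∈ Q)
    (hskmin : ∀ s ∈ Q, ⟪gradient f xk, sk⟫ ≤ ⟪gradient f xk, s⟫)
    (hmin : ∀ y ∈ Q, f xstar ≤ f y)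
    (L : ℝ) (hL : 0 < L)
    (hfull : ⟪gradient f xk, sk - xk⟫ ≤ -(L * ‖sk - xk‖ ^ 2))
    (hdesc : f (xk + (sk - xk)) ≤
      f xk + ⟪gradient f xk, sk - xk⟫ + L / 2 * ‖sk - xk‖ ^ 2) :
    f (xk + (sk - xk)) - f xstar ≤
      1 / 2 * min (L * ‖sk - xk‖ ^ 2) (f xk - f xstar) :=
  stmt1_general f Q hconv hdiff xk sk xstar hxstar hskmin L hfull hdesc
end

section
/- Let f be convex and differentiable on a convex compact set Q with minimizer x*, x ∈ Q, s ∈ argmin_{z∈Q} ⟪∇f(x), z⟫, d = s - x, and L > 0. If the partial-step condition θ < 1 holds, i.e. -⟪∇f(x), d⟫ < L‖d‖², and the sufficient-decrease condition f(x + θd) ≤ f(x) - (⟪∇f(x), d⟫)²/(2L‖d‖²) holds with θ = -⟪∇f(x), d⟫/(L‖d‖²), then, writing D for the diameter of Q, f(x + θd) - f(x*) ≤ (f(x) - f(x*))·(1 - (f(x) - f(x*))/(2LD²)). -/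
/-!
By the first-order condition for convex `f`, the primal gap `h = f x - f x*` is at most the
Frank–Wolfe gap `-⟪∇f x, d⟫`, and `‖d‖ ≤ D`. Hence the guaranteed decrease
`⟪∇f x, d⟫² / (2L‖d‖²)` is at least `h² / (2LD²)`, which is the claimed contraction
`h ↦ h (1 - h / (2LD²))`.
-/

open RealInnerProductSpace

theorem ConvexOn.add_fderiv_sub_le_s2 {E : Type*} [NormedAddCommGroup E] [NormedSpace ℝ E]
    {S : Set E} {f : E → ℝ} {f' : E →L[ℝ] ℝ} {x y : E} (hf : ConvexOn ℝ S f)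
    (hx : x ∈ S) (hy : y ∈ S) (hf' : HasFDerivAt f f' x) :
    f x + f' (y - x) ≤ f y := by
  let line : ℝ →ᵃ[ℝ] E := AffineMap.lineMap x y
  have hline : HasDerivAt line (y - x) 0 := by
    simpa [line] using AffineMap.hasDerivAt_lineMap (a := x) (b := y) (x := (0 : ℝ))
  have hderiv : HasDerivAt (f ∘ line) (f' (y - x)) 0 := by
    rw [← AffineMap.lineMap_apply_zero x y (k := ℝ)] at hf'
    exact hf'.comp_hasDerivAt 0 hline
  have hslope : f' (y - x) ≤ slope (f ∘ line) 0 1 :=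
    (hf.comp_affineMap line).le_slope_of_hasDerivWithinAt_Ioi (by simpa [line] using hx)
      (by simpa [line] using hy) one_pos hderiv.hasDerivWithinAt
  have hslope_eq : slope (f ∘ line) 0 1 = f y - f x := by simp [slope_def_field, line]
  linarith

theorem ConvexOn.add_inner_gradient_sub_le_s2 {F : Type*} [NormedAddCommGroup F]
    [InnerProductSpace ℝ F] [CompleteSpace F] {f : F → ℝ} {g x y : F}
    (hf : ConvexOn ℝ Set.univ f) (hg : HasGradientAt f g x) :
    f x + ⟪g, y - x⟫ ≤ f y :=
  hf.add_fderiv_sub_le_s2 (Set.mem_univ x) (Set.mem_univ y) hg.hasFDerivAt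

theorem ConvexOn.sub_le_neg_inner_gradient {F : Type*} [NormedAddCommGroup F]
    [InnerProductSpace ℝ F] [CompleteSpace F] {f : F → ℝ} {g x y s : F}
    (hf : ConvexOn ℝ Set.univ f) (hg : HasGradientAt f g x) (hs : ⟪g, s⟫ ≤ ⟪g, y⟫) :
    f x - f y ≤ -⟪g, s - x⟫ := by
  have hfirst := hf.add_inner_gradient_sub_le_s2 (y := y) hg
  rw [inner_sub_right] at hfirst ⊢
  linarith

theorem stmt2_general {n : ℕ} (f : EuclideanSpace ℝ (Fin n) → ℝ)
    (Q : Set (EuclideanSpace ℝ (Fin n)))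
    (hQcomp : IsCompact Q)
    (hconv : ConvexOn ℝ Set.univ f) (hdiff : Differentiable ℝ f)
    (x s xstar : EuclideanSpace ℝ (Fin n))
    (hx : x ∈ Q) (hs : s ∈ Q) (hxstar : xstar ∈ Q)
    (hsmin : ∀ z ∈ Q, ⟪gradient f x, s⟫ ≤ ⟪gradient f x, z⟫)
    (hmin : ∀ y ∈ Q, f xstar ≤ f y)
    (L : ℝ) (hL : 0 < L)
    (hpartial : -⟪gradient f x, s - x⟫ < L * ‖s - x‖ ^ 2)
    (hdec : f (x + (-⟪gradient f x, s - x⟫ / (L * ‖s - x‖ ^ 2)) • (s - x)) ≤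
      f x - (⟪gradient f x, s - x⟫) ^ 2 / (2 * L * ‖s - x‖ ^ 2)) :
    f (x + (-⟪gradient f x, s - x⟫ / (L * ‖s - x‖ ^ 2)) • (s - x)) - f xstar ≤
      (f x - f xstar) * (1 - (f x - f xstar) / (2 * L * (Metric.diam Q) ^ 2)) := by
  set g := ⟪gradient f x, s - x⟫
  have hd : s - x ≠ 0 := by
    rintro hd
    simp [g, hd] at hpartial
  have hdiam : ‖s - x‖ ≤ Metric.diam Q := by
    rw [← dist_eq_norm]
    exact Metric.dist_le_diam_of_mem hQcomp.isBounded hs hx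
  have hgap_nonneg : 0 ≤ f x - f xstar := sub_nonneg.mpr (hmin x hx)
  have hgap_le : f x - f xstar ≤ -g :=
    hconv.sub_le_neg_inner_gradient (hdiff x).hasGradientAt (hsmin xstar hxstar)
  have hstep : (f x - f xstar) ^ 2 / (2 * L * (Metric.diam Q) ^ 2) ≤
      g ^ 2 / (2 * L * ‖s - x‖ ^ 2) := by
    rw [← neg_sq g]
    have hd_pos := norm_pos_iff.mpr hd
    gcongr
  calc _ ≤ f x - f xstar - (f x - f xstar) ^ 2 / (2 * L * (Metric.diam Q) ^ 2) := by linarith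
    _ = _ := by ring

theorem stmt2 {n : ℕ} (f : EuclideanSpace ℝ (Fin n) → ℝ)
    (Q : Set (EuclideanSpace ℝ (Fin n)))
    (hQconv : Convex ℝ Q) (hQcomp : IsCompact Q)
    (hconv : ConvexOn ℝ Set.univ f) (hdiff : Differentiable ℝ f)
    (x s xstar : EuclideanSpace ℝ (Fin n))
    (hx : x ∈ Q) (hs : s ∈ Q) (hxstar : xstar ∈ Q)
    (hsmin : ∀ z ∈ Q, ⟪gradient f x, s⟫ ≤ ⟪gradient f x, z⟫)
    (hmin : ∀ y ∈ Q, f xstar ≤ f y)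
    (L : ℝ) (hL : 0 < L)
    (hpartial : -⟪gradient f x, s - x⟫ < L * ‖s - x‖ ^ 2)
    (hdec : f (x + (-⟪gradient f x, s - x⟫ / (L * ‖s - x‖ ^ 2)) • (s - x)) ≤
      f x - (⟪gradient f x, s - x⟫) ^ 2 / (2 * L * ‖s - x‖ ^ 2)) :
    f (x + (-⟪gradient f x, s - x⟫ / (L * ‖s - x‖ ^ 2)) • (s - x)) - f xstar ≤
      (f x - f xstar) * (1 - (f x - f xstar) / (2 * L * (Metric.diam Q) ^ 2)) :=
  stmt2_general f Q hQcomp hconv hdiff x s xstar hx hs hxstar hsmin hmin L hL hpartial hdec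
end

section
/- Let (h_k) be a nonnegative sequence and (L_k) a positive sequence, D > 0. Suppose h_1 ≤ (2D²·L_0)/3 and for each k ≥ 1 either h_{k+1} ≤ h_k/2, or h_{k+1} ≤ h_k·(1 - h_k/(2L_k D²)). Then for all k ≥ 1, h_k ≤ 2D²·(max_{0 ≤ j ≤ k-1} L_j)/(k + 2). -/
theorem stmt3 (h L : ℕ → ℝ) (D : ℝ) (hD : 0 < D)
    (hh : ∀ k, 0 ≤ h k) (hL : ∀ k, 0 < L k)
    (h1 : h 1 ≤ 2 * D ^ 2 * L 0 / 3)
    (hrec : ∀ k ≥ 1, h (k + 1) ≤ h k / 2 ∨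
      h (k + 1) ≤ h k * (1 - h k / (2 * L k * D ^ 2))) :
    ∀ k : ℕ, ∀ hk : 1 ≤ k,
      h k ≤ 2 * D ^ 2 *
        (Finset.range k).sup' (Finset.nonempty_range_iff.mpr (by omega)) L /
        ((k : ℝ) + 2) := by
  intro k hk
  induction k, hk using Nat.le_induction with
  | base =>
    simp only [Finset.range_one, Finset.sup'_singleton, Nat.cast_one]
    norm_num
    linarith [h1]
  | succ n hn ih =>
    have hne : (Finset.range (n+1)).Nonempty := Finset.nonempty_range_iff.mpr (by omega)
    have hne' : (Finset.range n).Nonempty := Finset.nonempty_range_iff.mpr (by omega)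
    set M := (Finset.range (n+1)).sup' hne L with hM
    have hMk : (Finset.range n).sup' hne' L ≤ M := by
      apply Finset.sup'_mono
      exact Finset.range_subset_range.mpr (Nat.le_succ n)
    have hLn : L n ≤ M := Finset.le_sup' L (Finset.self_mem_range_succ n)
    have hM0 : (0:ℝ) < M := lt_of_lt_of_le (hL n) hLn
    have hn1 : (1:ℝ) ≤ (n:ℝ) := by exact_mod_cast hn
    have hn2 : (0:ℝ) < (n:ℝ) + 2 := by linarith
    have hn3 : (0:ℝ) < (n:ℝ) + 3 := by linarith
    have hb : h n ≤ 2 * D^2 * M / ((n:ℝ) + 2) := by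
      refine ih.trans ?_
      gcongr
    have hx : (0:ℝ) ≤ h n := hh n
    have hc2 : (0:ℝ) < 2 * M * D^2 := by positivity
    have goalcast : ((n+1 : ℕ) : ℝ) + 2 = (n:ℝ) + 3 := by push_cast; ring
    rw [goalcast]
    rcases hrec n hn with hc | hc
    · -- full step
      refine hc.trans ?_
      have hb' : h n * ((n:ℝ) + 2) ≤ 2 * D^2 * M := (le_div_iff₀ hn2).mp hb
      rw [div_le_div_iff₀ (by norm_num) hn3]
      nlinarith [hx, hb', mul_pos (mul_pos (by norm_num : (0:ℝ) < 2) (pow_pos hD 2)) hM0]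
    · -- partial step
      refine hc.trans ?_
      have e1 : h n * (1 - h n / (2 * L n * D^2)) = h n - (h n)^2 / (2 * L n * D^2) := by
        ring
      have h2 : (h n)^2 / (2 * M * D^2) ≤ (h n)^2 / (2 * L n * D^2) := by
        exact div_le_div_of_nonneg_left (sq_nonneg _) (mul_pos (mul_pos two_pos (hL n)) (pow_pos hD 2))
          (by nlinarith [sq_nonneg D, pow_pos hD 2])
      have h3 : h n * (1 - h n / (2 * L n * D^2)) ≤ h n - (h n)^2 / (2 * M * D^2) := by
        rw [e1]; linarith
      refine h3.trans ?_
      have hb' : h n * ((n:ℝ) + 2) ≤ 2 * D^2 * M := (le_div_iff₀ hn2).mp hb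
      rw [le_div_iff₀ hn3]
      have ht : (h n)^2 / (2 * M * D^2) * (2 * M * D^2) = (h n)^2 :=
        div_mul_cancel₀ _ (ne_of_gt hc2)
      set t := (h n)^2 / (2 * M * D^2) with htdef
      have ht0 : 0 ≤ t := by positivity
      nlinarith [ht, ht0, hb', sq_nonneg (h n), hc2, hx, hn1,
        mul_nonneg (sub_nonneg.mpr hb') hx,
        mul_nonneg (mul_nonneg (sub_nonneg.mpr hb') hx) (by linarith : (0:ℝ) ≤ (n:ℝ)+1),
        sq_nonneg (2*D^2*M - h n*((n:ℝ)+2))]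
end

section
/- Let Q ⊂ ℝ^n be a compact convex set, f differentiable and convex on a neighborhood of Q, x* ∈ Q a minimizer of f over Q, and r > 0 such that the closed ball B(x*, r) ⊆ Q. Then for every x ∈ Q, sup_{u ∈ Q} ⟪∇f(x), x - u⟫ ≥ r·‖∇f(x)‖. -/
/-!
With `g = ∇f(x)`, convexity and minimality of `x*` give `⟪g, x - x*⟫ ≥ f x - f x* ≥ 0`, and the
point `u = x* - (r / ‖g‖) • g` of `B(x*, r) ⊆ Q` contributes `⟪g, x* - u⟫ = r ‖g‖` more, so
`⟪g, x - u⟫ ≥ r ‖g‖`. Compactness of `Q` is needed only so that the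
supremum is bounded (an unbounded `⨆` in `ℝ` is the junk value `0`).
-/

open RealInnerProductSpace Set

theorem ConvexOn.apply_sub_le_sub_of_hasFDerivAt {E : Type*} [NormedAddCommGroup E]
    [NormedSpace ℝ E] {s : Set E} {f : E → ℝ} {f' : E →L[ℝ] ℝ} {x y : E}
    (hf : ConvexOn ℝ s f) (hx : x ∈ s) (hy : y ∈ s) (hf' : HasFDerivAt f f' x) :
    f' (y - x) ≤ f y - f x := by
  set γ : ℝ →ᵃ[ℝ] E := AffineMap.lineMap x y
  have hline : ConvexOn ℝ (γ ⁻¹' s) (f ∘ γ) := hf.comp_affineMap γ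
  have hderiv : HasDerivAt (f ∘ γ) (f' (y - x)) 0 :=
    (by simpa [γ] using hf' : HasFDerivAt f f' (γ 0)).comp_hasDerivAt (0 : ℝ)
      AffineMap.hasDerivAt_lineMap
  simpa [slope_def_field, γ] using
    hline.le_slope_of_hasDerivAt (by simpa [γ] using hx) (by simpa [γ] using hy) one_pos hderiv

theorem ConvexOn.inner_gradient_sub_le_sub {E : Type*} [NormedAddCommGroup E]
    [InnerProductSpace ℝ E] [CompleteSpace E] {s : Set E} {f : E → ℝ} {x y : E}
    (hf : ConvexOn ℝ s f) (hx : x ∈ s) (hy : y ∈ s) (hdiff : DifferentiableAt ℝ f x) :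
    ⟪gradient f x, y - x⟫ ≤ f y - f x := by
  simpa using hf.apply_sub_le_sub_of_hasFDerivAt hx hy hdiff.hasGradientAt.hasFDerivAt

theorem exists_mem_closedBall_inner_sub_eq {E : Type*} [NormedAddCommGroup E]
    [InnerProductSpace ℝ E] (g c : E) {r : ℝ} (hr : 0 ≤ r) :
    ∃ u ∈ Metric.closedBall c r, ⟪g, c - u⟫ = r * ‖g‖ := by
  rcases eq_or_ne g 0 with rfl | hg
  · exact ⟨c, Metric.mem_closedBall_self hr, by simp⟩
  have hg' : 0 < ‖g‖ := norm_pos_iff.mpr hg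
  refine ⟨c - (r / ‖g‖) • g, ?_, ?_⟩
  · simp [norm_smul, abs_of_nonneg hr, hg'.ne']
  · rw [sub_sub_cancel, inner_smul_right, real_inner_self_eq_norm_sq]
    field_simp

theorem le_cbiSup_of_mem {α β : Type*} [ConditionallyCompleteLattice α]
    {f : β → α} {s : Set β} (hf : BddAbove (f '' s)) {c : β} (hc : c ∈ s) :
    f c ≤ ⨆ u ∈ s, f u := by
  refine le_ciSup₂ (f := fun u (_ : u ∈ s) => f u) (hf.mono ?_) c hc
  rintro _ ⟨_, ⟨u, rfl⟩, hu, rfl⟩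
  exact mem_image_of_mem f hu

theorem stmt7_general {n : ℕ} (Q : Set (EuclideanSpace ℝ (Fin n)))
    (hQcomp : IsCompact Q)
    (f : EuclideanSpace ℝ (Fin n) → ℝ)
    (hconv : ConvexOn ℝ Set.univ f) (hdiff : Differentiable ℝ f)
    (xstar : EuclideanSpace ℝ (Fin n))
    (hmin : ∀ y ∈ Q, f xstar ≤ f y)
    (r : ℝ) (hr : 0 < r) (hball : Metric.closedBall xstar r ⊆ Q)
    (x : EuclideanSpace ℝ (Fin n)) (hx : x ∈ Q) :
    r * ‖gradient f x‖ ≤ ⨆ u ∈ Q, ⟪gradient f x, x - u⟫ := by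
  set g := gradient f x
  have hbdd : BddAbove ((fun u => ⟪g, x - u⟫) '' Q) :=
    (hQcomp.image (by fun_prop)).bddAbove
  have hdescent : 0 ≤ ⟪g, x - xstar⟫ := by
    have := hconv.inner_gradient_sub_le_sub (mem_univ x) (mem_univ xstar) (hdiff x)
    rw [← neg_sub x xstar, inner_neg_right] at this
    linarith [hmin x hx]
  obtain ⟨u, hu, hgu⟩ := exists_mem_closedBall_inner_sub_eq g xstar hr.le
  calc r * ‖g‖ ≤ ⟪g, x - xstar⟫ + ⟪g, xstar - u⟫ := by linarith
    _ = ⟪g, x - u⟫ := by rw [← inner_add_right, sub_add_sub_cancel]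
    _ ≤ ⨆ u ∈ Q, ⟪g, x - u⟫ := le_cbiSup_of_mem hbdd (hball hu)

theorem stmt7 {n : ℕ} (Q : Set (EuclideanSpace ℝ (Fin n)))
    (hQconv : Convex ℝ Q) (hQcomp : IsCompact Q)
    (f : EuclideanSpace ℝ (Fin n) → ℝ)
    (hconv : ConvexOn ℝ Set.univ f) (hdiff : Differentiable ℝ f)
    (xstar : EuclideanSpace ℝ (Fin n)) (hxstar : xstar ∈ Q)
    (hmin : ∀ y ∈ Q, f xstar ≤ f y)
    (r : ℝ) (hr : 0 < r) (hball : Metric.closedBall xstar r ⊆ Q)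
    (x : EuclideanSpace ℝ (Fin n)) (hx : x ∈ Q) :
    r * ‖gradient f x‖ ≤ ⨆ u ∈ Q, ⟪gradient f x, x - u⟫ :=
  stmt7_general Q hQcomp f hconv hdiff xstar hmin r hr hball x hx
end
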